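/- There exists an absolute constant c > 0 such that for all integers q ≥ 3, all non-negative integers λ ≥ μ with 1 ≤ λ < q, and all positive integers N ≤ q with N·λ ≥ q, one has ν_{λ,μ}(q,N) ≥ c·q·(log q)^{−3}. -/

import Mathlib

/-- The product set `M·S = {m·s mod q : m ∈ {-mu,…,lam}\{0}, s ∈ S}` as a finset of `ZMod q`. -/
noncomputable def prodSet (q lam mu : ℕ) (S : Finset (ZMod q)) : Finset (ZMod q) :=
  (((Finset.Icc (-(mu : ℤ)) (lam : ℤ)).erase 0) ×ˢ S).image
    (fun p => (p.1 : ZMod q) * p.2)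

/-- `ν_{lam,mu}(q, r)`: the maximal size of `M·S` over subsets `S ⊆ Z_q` of cardinality `r`. -/
noncomputable def nu (q lam mu r : ℕ) : ℕ :=
  sSup {n | ∃ S : Finset (ZMod q), S.card = r ∧ (prodSet q lam mu S).card = n}

/-! Take `S = {1, …, N}` and the multipliers `1, …, M` with `M = min(λ, ⌊q/N⌋)`, so that
`q/2 ≤ MN ≤ q`; the products `ms` lie in `[1, q]` and hence stay distinct modulo `q`.
By Cauchy–Schwarz, `(MN)² ≤ #{ms} · E`, where the multiplicative energy `E` counts solutions of
`ms = m's'`. Writing `m = ga`, `m' = gb`, `s = bt`, `s' = at` maps these solutions onto quadruples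
with `gabt ≤ q`, of which there are at most `q (1 + log q)³` by a harmonic-sum count. -/

open Finset Real
open scoped Pointwise

lemma ZMod.natCast_injOn_Icc_one (q : ℕ) : Set.InjOn (Nat.cast : ℕ → ZMod q) (Icc 1 q) := by
  intro a ha b hb hab
  simp only [coe_Icc, Set.mem_Icc] at ha hb
  rw [ZMod.natCast_eq_natCast_iff, ← Nat.sub_add_cancel ha.1, ← Nat.sub_add_cancel hb.1] at hab
  have := (Nat.ModEq.add_right_cancel' 1 hab).eq_of_lt_of_lt (by omega) (by omega)
  omega

def quadruplesProdLe (X : ℕ) : Finset (((ℕ × ℕ) × ℕ) × ℕ) :=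
  {x ∈ ((Icc 1 X ×ˢ Icc 1 X) ×ˢ Icc 1 X) ×ˢ Icc 1 X | x.1.1.1 * x.1.1.2 * x.1.2 * x.2 ≤ X}

lemma card_Icc_filter_mul_le {n : ℕ} (hn : 0 < n) (X : ℕ) :
    #{d ∈ Icc 1 X | n * d ≤ X} = X / n := by
  have : {d ∈ Icc 1 X | n * d ≤ X} = Icc 1 (X / n) := by
    ext d
    simp only [mem_filter, mem_Icc, Nat.le_div_iff_mul_le hn]
    constructor
    · rintro ⟨⟨h1, -⟩, h⟩; exact ⟨h1, by linarith⟩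
    · rintro ⟨h1, h⟩; exact ⟨⟨h1, by nlinarith⟩, by linarith⟩
  simp [this]

lemma card_filter_mul_le_le_mul_sum_inv {α : Type*} (P : Finset α) (w : α → ℕ)
    (hw : ∀ p ∈ P, 0 < w p) (X : ℕ) :
    (#{x ∈ P ×ˢ Icc 1 X | w x.1 * x.2 ≤ X} : ℝ) ≤ X * ∑ p ∈ P, (w p : ℝ)⁻¹ := by
  have hcount : #{x ∈ P ×ˢ Icc 1 X | w x.1 * x.2 ≤ X} = ∑ p ∈ P, X / w p := by
    rw [card_filter, sum_product]
    refine sum_congr rfl fun p hp => ?_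
    rw [← card_filter, card_Icc_filter_mul_le (hw p hp)]
  rw [hcount, Nat.cast_sum, mul_sum]
  gcongr with p
  exact Nat.cast_div_le

lemma sum_inv_Icc_le_one_add_log (X : ℕ) : ∑ k ∈ Icc 1 X, (k : ℝ)⁻¹ ≤ 1 + log X := by
  simpa [harmonic_eq_sum_Icc] using harmonic_le_one_add_log X

lemma card_quadruplesProdLe_le (X : ℕ) : (#(quadruplesProdLe X) : ℝ) ≤ X * (1 + log X) ^ 3 := by
  have hpos : ∀ p ∈ (Icc 1 X ×ˢ Icc 1 X) ×ˢ Icc 1 X, 0 < p.1.1 * p.1.2 * p.2 := by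
    simp only [mem_product, mem_Icc]
    rintro p ⟨⟨⟨h1, -⟩, h2, -⟩, h3, -⟩
    positivity
  have hsum : ∑ p ∈ (Icc 1 X ×ˢ Icc 1 X) ×ˢ Icc 1 X, ((p.1.1 * p.1.2 * p.2 : ℕ) : ℝ)⁻¹
      = (∑ k ∈ Icc 1 X, (k : ℝ)⁻¹) ^ 3 := by
    simp only [sum_product, Nat.cast_mul, mul_inv, ← sum_mul_sum, pow_three]
    ring
  calc (#(quadruplesProdLe X) : ℝ)
      ≤ X * ∑ p ∈ (Icc 1 X ×ˢ Icc 1 X) ×ˢ Icc 1 X, ((p.1.1 * p.1.2 * p.2 : ℕ) : ℝ)⁻¹ :=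
        card_filter_mul_le_le_mul_sum_inv _ _ hpos X
    _ ≤ X * (1 + log X) ^ 3 := by
        rw [hsum]
        gcongr
        exact sum_inv_Icc_le_one_add_log X

lemma Nat.exists_mul_eq_of_mul_eq {m n m' n' : ℕ} (hm : 0 < m) (h : m * n = m' * n') :
    ∃ g a b c, m = g * a ∧ m' = g * b ∧ n = b * c ∧ n' = a * c := by
  obtain ⟨g, a, ⟨b, rfl⟩, ⟨c, rfl⟩, rfl⟩ := exists_dvd_and_dvd_of_dvd_mul (Dvd.intro n h)
  refine ⟨g, a, b, c, rfl, rfl, ?_, rfl⟩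
  exact Nat.eq_of_mul_eq_mul_left hm (by rw [h]; ring)

lemma mulEnergy_Icc_le_card_quadruplesProdLe {M N X : ℕ} (h : M * N ≤ X) :
    mulEnergy (Icc 1 M) (Icc 1 N) ≤ #(quadruplesProdLe X) := by
  let ψ : ((ℕ × ℕ) × ℕ) × ℕ → (ℕ × ℕ) × ℕ × ℕ :=
    fun x => ((x.1.1.1 * x.1.1.2, x.1.1.1 * x.1.2), (x.1.2 * x.2, x.1.1.2 * x.2))
  calc mulEnergy (Icc 1 M) (Icc 1 N) ≤ #((quadruplesProdLe X).image ψ) := card_le_card ?_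
    _ ≤ #(quadruplesProdLe X) := card_image_le
  rintro ⟨⟨m, m'⟩, n, n'⟩ hx
  simp only [mem_filter, mem_product, mem_Icc] at hx
  obtain ⟨⟨⟨⟨hm, hmM⟩, -⟩, ⟨hn, hnN⟩, -⟩, hmn⟩ := hx
  obtain ⟨g, a, b, c, rfl, rfl, rfl, rfl⟩ := Nat.exists_mul_eq_of_mul_eq hm hmn
  simp only [Nat.one_le_iff_ne_zero, mul_ne_zero_iff] at hm hn
  have hprod : g * a * b * c ≤ X :=
    calc g * a * b * c = (g * a) * (b * c) := by ring
      _ ≤ M * N := Nat.mul_le_mul hmM hnN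
      _ ≤ X := h
  have hle : ∀ d, d ∣ g * a * b * c → d ≤ X := fun d hd =>
    (Nat.le_of_dvd (Nat.pos_of_ne_zero (by simp [hm.1, hm.2, hn.1, hn.2])) hd).trans hprod
  simp only [quadruplesProdLe, mem_image, mem_filter, mem_product, mem_Icc,
    Nat.one_le_iff_ne_zero]
  refine ⟨(((g, a), b), c), ⟨⟨⟨⟨?_, ?_⟩, ?_⟩, ?_⟩, hprod⟩, rfl⟩
  exacts [⟨hm.1, hle g ⟨a * b * c, by ring⟩⟩, ⟨hm.2, hle a ⟨g * b * c, by ring⟩⟩,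
    ⟨hn.1, hle b ⟨g * a * c, by ring⟩⟩, ⟨hn.2, hle c ⟨g * a * b, by ring⟩⟩]

lemma card_prodSet_le_nu {q : ℕ} [NeZero q] (lam mu : ℕ) (S : Finset (ZMod q)) :
    #(prodSet q lam mu S) ≤ nu q lam mu #S :=
  le_csSup ⟨q, by rintro n ⟨S', -, rfl⟩; simpa using card_le_univ (prodSet q lam mu S')⟩
    ⟨S, rfl, rfl⟩

lemma card_Icc_mul_Icc_le_nu {q lam mu M N : ℕ} [NeZero q] (hM : M ≤ lam) (hN : N ≤ q)
    (hMN : M * N ≤ q) : #(Icc 1 M * Icc 1 N) ≤ nu q lam mu N := by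
  have hMN_sub : Icc 1 M * Icc 1 N ⊆ Icc 1 q :=
    (Icc_mul_Icc_subset' 1 M 1 N).trans (Icc_subset_Icc_right hMN)
  set S := (Icc 1 N).image (Nat.cast : ℕ → ZMod q)
  have hS : #S = N := by
    rw [card_image_of_injOn ((ZMod.natCast_injOn_Icc_one q).mono
      (coe_subset.mpr (Icc_subset_Icc_right hN))), Nat.card_Icc, Nat.add_sub_cancel]
  have himage : (Icc 1 M * Icc 1 N).image (Nat.cast : ℕ → ZMod q) ⊆ prodSet q lam mu S := by
    simp only [subset_iff, mem_image, mem_mul, mem_Icc]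
    rintro _ ⟨_, ⟨m, ⟨hm, hmM⟩, n, hn, rfl⟩, rfl⟩
    rw [prodSet, mem_image]
    refine ⟨((m : ℤ), (n : ZMod q)), ?_, by push_cast; rfl⟩
    simp only [S, mem_product, mem_erase, mem_Icc, mem_image]
    exact ⟨⟨by omega, by omega, by omega⟩, n, hn, rfl⟩
  calc #(Icc 1 M * Icc 1 N)
      = #((Icc 1 M * Icc 1 N).image (Nat.cast : ℕ → ZMod q)) :=
        (card_image_of_injOn ((ZMod.natCast_injOn_Icc_one q).mono (coe_subset.mpr hMN_sub))).symm
    _ ≤ #(prodSet q lam mu S) := card_le_card himage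
    _ ≤ nu q lam mu N := hS ▸ card_prodSet_le_nu lam mu S

lemma sq_mul_le_card_Icc_mul_Icc_mul {M N X : ℕ} (h : M * N ≤ X) :
    ((M * N : ℕ) : ℝ) ^ 2 ≤ #(Icc 1 M * Icc 1 N) * (X * (1 + log X) ^ 3) := by
  have hCS : (M * N) ^ 2 ≤ #(Icc 1 M * Icc 1 N) * mulEnergy (Icc 1 M) (Icc 1 N) := by
    simpa [mul_pow] using le_card_mul_mul_mulEnergy (Icc 1 M) (Icc 1 N)
  calc ((M * N : ℕ) : ℝ) ^ 2
      ≤ #(Icc 1 M * Icc 1 N) * (mulEnergy (Icc 1 M) (Icc 1 N) : ℝ) := by exact_mod_cast hCS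
    _ ≤ #(Icc 1 M * Icc 1 N) * (#(quadruplesProdLe X) : ℝ) := by
        gcongr; exact mulEnergy_Icc_le_card_quadruplesProdLe h
    _ ≤ #(Icc 1 M * Icc 1 N) * (X * (1 + log X) ^ 3) := by
        gcongr; exact card_quadruplesProdLe_le X

lemma le_two_mul_min_div_mul {q N lam : ℕ} (hN : N ≤ q) (hq : q ≤ N * lam) :
    q ≤ 2 * (min lam (q / N) * N) := by
  rcases le_total lam (q / N) with h | h
  · rw [min_eq_left h]; linarith [mul_comm N lam]
  · rw [min_eq_right h]
    rcases N.eq_zero_or_pos with rfl | hN0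
    · simpa using hq
    have hlt := Nat.lt_div_mul_add (a := q) hN0
    have hle : N ≤ q / N * N := Nat.le_mul_of_pos_left N (Nat.div_pos hN hN0)
    omega

lemma one_le_log_of_three_le {x : ℝ} (hx : 3 ≤ x) : 1 ≤ log x := by
  rw [le_log_iff_exp_le (by linarith)]
  linarith [exp_one_lt_d9]

lemma div_log_pow_le_card_Icc_mul_Icc {M N X : ℕ} (hX : 3 ≤ X) (h : M * N ≤ X)
    (h2 : X ≤ 2 * (M * N)) : (X : ℝ) / (32 * log X ^ 3) ≤ #(Icc 1 M * Icc 1 N) := by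
  have hX0 : (0 : ℝ) < X := by positivity
  have hlog : 1 ≤ log X := one_le_log_of_three_le (by exact_mod_cast hX)
  have hsq : (X : ℝ) * X ≤ 32 * log X ^ 3 * #(Icc 1 M * Icc 1 N) * X :=
    calc (X : ℝ) * X ≤ (2 * (M * N : ℕ)) ^ 2 := by
          rw [← sq]; gcongr; exact_mod_cast h2
      _ = 4 * ((M * N : ℕ) : ℝ) ^ 2 := by ring
      _ ≤ 4 * (#(Icc 1 M * Icc 1 N) * (X * (1 + log X) ^ 3)) := by
          gcongr; exact sq_mul_le_card_Icc_mul_Icc_mul h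
      _ ≤ 4 * (#(Icc 1 M * Icc 1 N) * (X * (2 * log X) ^ 3)) := by gcongr; linarith
      _ = 32 * log X ^ 3 * #(Icc 1 M * Icc 1 N) * X := by ring
  rw [div_le_iff₀' (by positivity)]
  exact le_of_mul_le_mul_right hsq hX0

theorem stmt19 : ∃ c : ℝ, c > 0 ∧ ∀ q lam mu N : ℕ, 3 ≤ q → mu ≤ lam → 1 ≤ lam →
    lam < q → 1 ≤ N → N ≤ q → q ≤ N * lam →
    c * (q : ℝ) / Real.log q ^ 3 ≤ (nu q lam mu N : ℝ) := by
  refine ⟨1 / 32, by norm_num, fun q lam mu N hq _ _ _ _ hNq hqN => ?_⟩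
  have : NeZero q := ⟨by omega⟩
  set M := min lam (q / N)
  have hMN : M * N ≤ q :=
    (Nat.mul_le_mul_right N (min_le_right _ _)).trans (Nat.div_mul_le_self q N)
  calc 1 / 32 * (q : ℝ) / log q ^ 3 = q / (32 * log q ^ 3) := by
        rw [mul_comm, mul_one_div, div_div]
    _ ≤ (#(Icc 1 M * Icc 1 N) : ℝ) :=
        div_log_pow_le_card_Icc_mul_Icc hq hMN (le_two_mul_min_div_mul hNq hqN)
    _ ≤ (nu q lam mu N : ℝ) := by
        exact_mod_cast card_Icc_mul_Icc_le_nu (min_le_left _ _) hNq hMN
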